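/- For a nonzero positive semidefinite real symmetric m×m matrix Ω, define d = trace(Ω)² / trace(Ω²) and d* = trace(Ω²)³ / trace(Ω³)². Then 1 ≤ d* ≤ d ≤ m. -/

import Mathlib

/-!
With `λᵢ ≥ 0` the eigenvalues of `Ω` and `Sₖ = trace (Ω ^ k) = ∑ λᵢ ^ k`, everything is
Cauchy–Schwarz on power sums: `S₃² ≤ S₂ S₄ ≤ S₂³` gives `1 ≤ d*`, `S₂² ≤ S₁ S₃` squared gives
`d* ≤ d`, and `S₁² ≤ m S₂` gives `d ≤ m`. Since `Ω ≠ 0`, some `λᵢ > 0`, so `S₃ > 0`.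
-/

open Matrix

namespace Finset

section OrderedSemiring

variable {ι R : Type*} [CommSemiring R] [LinearOrder R] [IsStrictOrderedRing R] [ExistsAddOfLE R]
  {s : Finset ι} {f : ι → R}

theorem sq_sum_pow_three_le_sum_sq_pow_three :
    (∑ i ∈ s, f i ^ 3) ^ 2 ≤ (∑ i ∈ s, f i ^ 2) ^ 3 :=
  calc (∑ i ∈ s, f i ^ 3) ^ 2 ≤ (∑ i ∈ s, f i ^ 2) * ∑ i ∈ s, (f i ^ 2) ^ 2 :=
        sum_sq_le_sum_mul_sum_of_sq_le_mul s (fun _ _ ↦ sq_nonneg _) (fun _ _ ↦ sq_nonneg _)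
          fun _ _ ↦ le_of_eq (by ring)
    _ ≤ (∑ i ∈ s, f i ^ 2) * (∑ i ∈ s, f i ^ 2) ^ 2 := by
        gcongr
        · exact sum_nonneg fun _ _ ↦ sq_nonneg _
        · exact sum_sq_le_sq_sum_of_nonneg fun _ _ ↦ sq_nonneg _
    _ = (∑ i ∈ s, f i ^ 2) ^ 3 := by ring

theorem sq_sum_sq_le_sum_mul_sum_pow_three (hf : ∀ i ∈ s, 0 ≤ f i) :
    (∑ i ∈ s, f i ^ 2) ^ 2 ≤ (∑ i ∈ s, f i) * ∑ i ∈ s, f i ^ 3 :=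
  sum_sq_le_sum_mul_sum_of_sq_le_mul s hf (fun i hi ↦ pow_nonneg (hf i hi) 3)
    fun _ _ ↦ le_of_eq (by ring)

end OrderedSemiring

section OrderedField

variable {ι K : Type*} [Field K] [LinearOrder K] [IsStrictOrderedRing K] {s : Finset ι} {f : ι → K}

theorem one_le_sum_sq_pow_three_div_sq_sum_pow_three (h : ∑ i ∈ s, f i ^ 3 ≠ 0) :
    1 ≤ (∑ i ∈ s, f i ^ 2) ^ 3 / (∑ i ∈ s, f i ^ 3) ^ 2 :=
  (one_le_div (by positivity)).mpr sq_sum_pow_three_le_sum_sq_pow_three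

theorem sum_sq_pow_three_div_sq_sum_pow_three_le (hf : ∀ i ∈ s, 0 ≤ f i)
    (h : ∑ i ∈ s, f i ^ 3 ≠ 0) :
    (∑ i ∈ s, f i ^ 2) ^ 3 / (∑ i ∈ s, f i ^ 3) ^ 2 ≤ (∑ i ∈ s, f i) ^ 2 / ∑ i ∈ s, f i ^ 2 := by
  set S₁ := ∑ i ∈ s, f i
  set S₂ := ∑ i ∈ s, f i ^ 2
  set S₃ := ∑ i ∈ s, f i ^ 3
  have hS₂ : 0 < S₂ := by
    refine lt_of_pow_lt_pow_left₀ 3 (sum_nonneg fun _ _ ↦ sq_nonneg _) ?_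
    rw [zero_pow three_ne_zero]
    exact (by positivity : 0 < S₃ ^ 2).trans_le sq_sum_pow_three_le_sum_sq_pow_three
  rw [div_le_div_iff₀ (by positivity) hS₂]
  calc S₂ ^ 3 * S₂ = (S₂ ^ 2) ^ 2 := by ring
    _ ≤ (S₁ * S₃) ^ 2 := by gcongr; exact sq_sum_sq_le_sum_mul_sum_pow_three hf
    _ = S₁ ^ 2 * S₃ ^ 2 := by ring

theorem sq_sum_div_sum_sq_le_card : (∑ i ∈ s, f i) ^ 2 / ∑ i ∈ s, f i ^ 2 ≤ #s :=
  div_le_of_le_mul₀ (sum_nonneg fun _ _ ↦ sq_nonneg _) (Nat.cast_nonneg _) sq_sum_le_card_mul_sum_sq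

end OrderedField

end Finset

theorem Matrix.IsHermitian.trace_pow_eq_sum_eigenvalues_pow {𝕜 n : Type*} [RCLike 𝕜] [Fintype n]
    [DecidableEq n] {A : Matrix n n 𝕜} (hA : A.IsHermitian) (k : ℕ) :
    (A ^ k).trace = ∑ i, (hA.eigenvalues i : 𝕜) ^ k := by
  conv_lhs => rw [hA.spectral_theorem, ← map_pow, Unitary.conjStarAlgAut_apply, trace_mul_cycle,
    Unitary.coe_star_mul_self, one_mul, diagonal_pow, trace_diagonal]
  simp

/-- For a nonzero positive semidefinite real symmetric `m × m` matrix `Ω`,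
with `d = trace(Ω)² / trace(Ω²)` and `d* = trace(Ω²)³ / trace(Ω³)²`, one has
`1 ≤ d* ≤ d ≤ m`. -/
theorem stmt_5 {m : ℕ} (Ω : Matrix (Fin m) (Fin m) ℝ) (hΩ : Ω.PosSemidef) (hne : Ω ≠ 0)
    (d dstar : ℝ)
    (hd : d = (Ω.trace) ^ 2 / (Ω ^ 2).trace)
    (hdstar : dstar = ((Ω ^ 2).trace) ^ 3 / ((Ω ^ 3).trace) ^ 2) :
    1 ≤ dstar ∧ dstar ≤ d ∧ d ≤ (m : ℝ) := by
  set ev := hΩ.1.eigenvalues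
  have htr (k : ℕ) : (Ω ^ k).trace = ∑ i, ev i ^ k := by
    simpa using hΩ.1.trace_pow_eq_sum_eigenvalues_pow k
  have htr₁ : Ω.trace = ∑ i, ev i := by simpa using htr 1
  obtain ⟨j, hj⟩ := Function.ne_iff.mp (hΩ.1.eigenvalues_eq_zero_iff.not.mpr hne)
  have hev : ∀ i ∈ Finset.univ, 0 ≤ ev i := fun i _ ↦ hΩ.eigenvalues_nonneg i
  have hS₃ : ∑ i, ev i ^ 3 ≠ 0 :=
    (Finset.sum_pos' (fun i hi ↦ pow_nonneg (hev i hi) 3)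
      ⟨j, Finset.mem_univ j, pow_pos ((hev j (Finset.mem_univ j)).lt_of_ne' hj) 3⟩).ne'
  rw [hd, hdstar, htr₁, htr, htr]
  refine ⟨Finset.one_le_sum_sq_pow_three_div_sq_sum_pow_three hS₃,
    Finset.sum_sq_pow_three_div_sq_sum_pow_three_le hev hS₃, ?_⟩
  simpa using Finset.sq_sum_div_sum_sq_le_card (s := Finset.univ) (f := ev)
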